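/- There exists exactly one 11-tuple (K10, K1100, K1010, K0110, L, L0, L00, L10, L100, L010, L110) of formal power series in ℚ[[t]] satisfying the system (with S denoting L0 − K10 + L100 − K1100 + L010 − K1010 + L110 − K0110): K10 = t + t·L0; K1100 = t·K10 + t·L100; K1010 = 2t·K10 + t·L010; K0110 = t·K10 + t·L110; L = 1 + 2t·L² + t·(L−1) + 2t·S; L0 = 2t·L·L0 + t·L + t·L0 + t·S; L00 = 2t·L·L00 + t·L0 + t·L00 + t·(L100 − K1100); L10 = 2t·L·L10 + t·L0 + t + t·L10 + t·(L0 − K10 + L010 − K1010 + L110 − K0110); L100 = 2t·L·L100 + t·L10 + t·L100 + t·(L100 − K1100); L010 = 2t·L·L010 + t·(L10 + L·K10) + t·L010 + t·(L010 − K1010); L110 = 2t·L·L110 + t·(L00 + L·K10) + t·L110 + t·(L110 − K0110). Moreover, the series L of this unique solution satisfies the quartic equation 8t³·L⁴ − 4t²(3t³+4t²−6t+3)·L³ + 2t(3t⁵−12t⁴−10t³+14t²−10t+3)·L² + (t−1)(11t⁵−10t⁴−6t³−3t²−t+1)·L + (t−1)(5t⁵−4t⁴+6t³−7t²+5t−1)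 = 0 in ℚ[[t]]. -/

import Mathlib

/-!
Each equation of the system has the form `u = c + X * P(u)` with `P` a polynomial, so the
right-hand side is a contraction for the `X`-adic topology, and Picard iteration converges to
its unique fixed point.

For the quartic, subtracting twice the `L0`-equation from the `L`-equation gives
`2 L0 = L - 1`, hence `2 K10 = X (L + 1)`. What remains is a linear system for
`L00, L10, L100, L010, L110` over `ℚ[X, L]` whose diagonal coefficients are the units
`a = 1 - X - 2 X L` and `b = (1 - X)² - 2 X L`; eliminating these five unknowns leaves
`a² b` times the quartic.
-/

open PowerSeries

/-- The system (12) (for `k = 2`, after the 0/1 symmetry) of the paper. -/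
def SysL2 (K10 K1100 K1010 K0110 L L0 L00 L10 L100 L010 L110 : PowerSeries ℚ) : Prop :=
  K10 = X + X * L0 ∧
  K1100 = X * K10 + X * L100 ∧
  K1010 = 2 * X * K10 + X * L010 ∧
  K0110 = X * K10 + X * L110 ∧
  L = 1 + 2 * X * L ^ 2 + X * (L - 1)
      + 2 * X * (L0 - K10 + L100 - K1100 + L010 - K1010 + L110 - K0110) ∧
  L0 = 2 * X * L * L0 + X * L + X * L0
      + X * (L0 - K10 + L100 - K1100 + L010 - K1010 + L110 - K0110) ∧
  L00 = 2 * X * L * L00 + X * L0 + X * L00 + X * (L100 - K1100) ∧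
  L10 = 2 * X * L * L10 + X * L0 + X + X * L10
      + X * (L0 - K10 + L010 - K1010 + L110 - K0110) ∧
  L100 = 2 * X * L * L100 + X * L10 + X * L100 + X * (L100 - K1100) ∧
  L010 = 2 * X * L * L010 + X * (L10 + L * K10) + X * L010 + X * (L010 - K1010) ∧
  L110 = 2 * X * L * L110 + X * (L00 + L * K10) + X * L110 + X * (L110 - K0110)

theorem MvPolynomial.eval_sub_eval_mem {ι S : Type*} [CommRing S] {I : Ideal S} {u v : ι → S}
    (h : ∀ i, u i - v i ∈ I) (p : MvPolynomial ι S) : eval u p - eval v p ∈ I := by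
  have hmk (w : ι → S) : Ideal.Quotient.mk I (eval w p) =
      eval₂ (Ideal.Quotient.mk I) (Ideal.Quotient.mk I ∘ w) p :=
    eval₂_comp_left _ (RingHom.id S) w p
  have huv : Ideal.Quotient.mk I ∘ u = Ideal.Quotient.mk I ∘ v :=
    _root_.funext fun i => Ideal.Quotient.eq.mpr (h i)
  rw [← Ideal.Quotient.eq, hmk, hmk, huv]

namespace PowerSeries

variable {R ι : Type*} [CommRing R]

theorem X_pow_dvd_sub_iff {n : ℕ} {f g : R⟦X⟧} :
    X ^ n ∣ f - g ↔ ∀ k < n, coeff k f = coeff k g := by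
  simp only [X_pow_dvd_iff, map_sub, sub_eq_zero]

theorem eq_of_forall_X_pow_dvd_sub {f g : R⟦X⟧} (h : ∀ n, X ^ n ∣ f - g) : f = g :=
  ext fun k => X_pow_dvd_sub_iff.mp (h (k + 1)) k k.lt_succ_self

def IsXAdicContraction (F : (ι → R⟦X⟧) → ι → R⟦X⟧) : Prop :=
  ∀ n u v, (∀ i, X ^ n ∣ u i - v i) → ∀ i, X ^ (n + 1) ∣ F u i - F v i

namespace IsXAdicContraction

variable {F : (ι → R⟦X⟧) → ι → R⟦X⟧}

theorem X_pow_dvd_iterate_sub (hF : IsXAdicContraction F) (n : ℕ) (u v : ι → R⟦X⟧) (i : ι) :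
    X ^ n ∣ F^[n] u i - F^[n] v i := by
  induction n generalizing i with
  | zero => simp
  | succ n ih => simpa only [Function.iterate_succ_apply'] using hF n _ _ ih i

theorem coeff_iterate_eq_of_lt (hF : IsXAdicContraction F) {k n : ℕ} (hk : k < n)
    (u v : ι → R⟦X⟧) (i : ι) :
    coeff k (F^[n] u i) = coeff k (F^[k + 1] v i) := by
  obtain ⟨m, rfl⟩ := Nat.exists_eq_add_of_lt hk
  rw [show k + m + 1 = k + 1 + m by omega, Function.iterate_add_apply]
  exact X_pow_dvd_sub_iff.mp (hF.X_pow_dvd_iterate_sub _ _ _ i) k k.lt_succ_self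

theorem eq_of_isFixedPt (hF : IsXAdicContraction F) {u v : ι → R⟦X⟧} (hu : F u = u)
    (hv : F v = v) : u = v :=
  funext fun i => eq_of_forall_X_pow_dvd_sub fun n => by
    simpa only [Function.iterate_fixed hu, Function.iterate_fixed hv]
      using hF.X_pow_dvd_iterate_sub n u v i

theorem existsUnique_fixedPt (hF : IsXAdicContraction F) : ∃! u, F u = u := by
  set u : ι → R⟦X⟧ := fun i => mk fun k => coeff k (F^[k + 1] 0 i)
  have hu : ∀ n i, X ^ n ∣ u i - F^[n] 0 i := fun n i =>
    X_pow_dvd_sub_iff.mpr fun k hk => by rw [coeff_mk, hF.coeff_iterate_eq_of_lt hk]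
  have hFu : F u = u := funext fun i => ext fun k => by
    rw [X_pow_dvd_sub_iff.mp (hF k _ _ (hu k) i) k k.lt_succ_self,
      ← Function.iterate_succ_apply' F, coeff_mk]
  exact ⟨u, hFu, fun v hv => hF.eq_of_isFixedPt hv hFu⟩

end IsXAdicContraction

theorem isXAdicContraction_add_X_mul_eval (c : ι → R⟦X⟧) (P : ι → MvPolynomial ι R⟦X⟧) :
    IsXAdicContraction fun u i => c i + X * MvPolynomial.eval u (P i) := by
  intro n u v huv i
  rw [add_sub_add_left_eq_sub, ← mul_sub, pow_succ']
  refine mul_dvd_mul_left X (Ideal.mem_span_singleton.mp ?_)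
  exact MvPolynomial.eval_sub_eval_mem (fun i => Ideal.mem_span_singleton.mpr (huv i)) _

theorem existsUnique_eq_add_X_mul_eval (c : ι → R⟦X⟧) (P : ι → MvPolynomial ι R⟦X⟧) :
    ∃! u : ι → R⟦X⟧, ∀ i, u i = c i + X * MvPolynomial.eval u (P i) := by
  simpa only [funext_iff, eq_comm] using
    (isXAdicContraction_add_X_mul_eval c P).existsUnique_fixedPt

end PowerSeries

namespace SysL2

inductive Var
  | K10 | K1100 | K1010 | K0110 | L | L0 | L00 | L10 | L100 | L010 | L110

open Var

theorem Var.forall {p : Var → Prop} :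
    (∀ i, p i) ↔ p K10 ∧ p K1100 ∧ p K1010 ∧ p K0110 ∧ p L ∧ p L0 ∧ p L00 ∧ p L10 ∧ p L100 ∧
      p L010 ∧ p L110 :=
  ⟨fun h => ⟨h _, h _, h _, h _, h _, h _, h _, h _, h _, h _, h _⟩,
    fun ⟨h1, h2, h3, h4, h5, h6, h7, h8, h9, h10, h11⟩ i => by cases i <;> assumption⟩

def Var.equivTuple (A : Type*) :
    (Var → A) ≃ A × A × A × A × A × A × A × A × A × A × A where
  toFun u := (u K10, u K1100, u K1010, u K0110, u L, u L0, u L00, u L10, u L100, u L010, u L110)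
  invFun v
    | K10 => v.1 | K1100 => v.2.1 | K1010 => v.2.2.1 | K0110 => v.2.2.2.1
    | L => v.2.2.2.2.1 | L0 => v.2.2.2.2.2.1 | L00 => v.2.2.2.2.2.2.1
    | L10 => v.2.2.2.2.2.2.2.1 | L100 => v.2.2.2.2.2.2.2.2.1
    | L010 => v.2.2.2.2.2.2.2.2.2.1 | L110 => v.2.2.2.2.2.2.2.2.2.2
  left_inv u := funext fun i => by cases i <;> rfl
  right_inv _ := rfl

-- Equation `i` of the system reads `u i = const i + X * eval u (poly i)`.
noncomputable def const : Var → ℚ⟦X⟧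
  | L => 1
  | _ => 0

noncomputable def poly (i : Var) : MvPolynomial Var ℚ⟦X⟧ :=
  let x := MvPolynomial.X (R := ℚ⟦X⟧)
  let S := x L0 - x K10 + x L100 - x K1100 + x L010 - x K1010 + x L110 - x K0110
  match i with
  | K10 => 1 + x L0
  | K1100 => x K10 + x L100
  | K1010 => 2 * x K10 + x L010
  | K0110 => x K10 + x L110
  | L => 2 * x L ^ 2 + x L - 1 + 2 * S
  | L0 => 2 * x L * x L0 + x L + x L0 + S
  | L00 => 2 * x L * x L00 + x L0 + x L00 + (x L100 - x K1100)
  | L10 => 2 * x L * x L10 + x L0 + 1 + x L10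
      + (x L0 - x K10 + x L010 - x K1010 + x L110 - x K0110)
  | L100 => 2 * x L * x L100 + x L10 + x L100 + (x L100 - x K1100)
  | L010 => 2 * x L * x L010 + (x L10 + x L * x K10) + x L010 + (x L010 - x K1010)
  | L110 => 2 * x L * x L110 + (x L00 + x L * x K10) + x L110 + (x L110 - x K0110)

theorem iff_forall_eq (u : Var → ℚ⟦X⟧) :
    SysL2 (u K10) (u K1100) (u K1010) (u K0110) (u L) (u L0) (u L00) (u L10) (u L100)
      (u L010) (u L110) ↔ ∀ i, u i = const i + X * MvPolynomial.eval u (poly i) := by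
  simp only [SysL2, Var.forall, const, poly, map_add, map_sub, map_mul, map_pow, map_one,
    map_ofNat, MvPolynomial.eval_X]
  ring_nf

variable {K10 K1100 K1010 K0110 L L0 L00 L10 L100 L010 L110 : ℚ⟦X⟧}

theorem two_mul_L0 (h : SysL2 K10 K1100 K1010 K0110 L L0 L00 L10 L100 L010 L110) :
    2 * L0 = L - 1 := by
  obtain ⟨-, -, -, -, hL, hL0, -⟩ := h
  have ha : IsUnit (1 - X - 2 * X * L) := isUnit_iff_constantCoeff.mpr (by simp)
  exact ha.mul_left_cancel (by linear_combination 2 * hL0 - hL)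

theorem two_mul_K10 (h : SysL2 K10 K1100 K1010 K0110 L L0 L00 L10 L100 L010 L110) :
    2 * K10 = X * (L + 1) := by
  linear_combination 2 * h.1 + X * h.two_mul_L0

theorem quartic (h : SysL2 K10 K1100 K1010 K0110 L L0 L00 L10 L100 L010 L110) :
    8 * X ^ 3 * L ^ 4
      - 4 * X ^ 2 * (3 * X ^ 3 + 4 * X ^ 2 - 6 * X + 3) * L ^ 3
      + 2 * X * (3 * X ^ 5 - 12 * X ^ 4 - 10 * X ^ 3 + 14 * X ^ 2 - 10 * X + 3) * L ^ 2
      + (X - 1) * (11 * X ^ 5 - 10 * X ^ 4 - 6 * X ^ 3 - 3 * X ^ 2 - X + 1) * L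
      + (X - 1) * (5 * X ^ 5 - 4 * X ^ 4 + 6 * X ^ 3 - 7 * X ^ 2 + 5 * X - 1) = 0 := by
  have hL0 := h.two_mul_L0
  have hK10 := h.two_mul_K10
  obtain ⟨h1, h2, h3, h4, h5, -, h7, h8, h9, h10, h11⟩ := h
  let a : ℚ⟦X⟧ := 1 - X - 2 * X * L
  let b : ℚ⟦X⟧ := (1 - X) ^ 2 - 2 * X * L
  have hL100 : 2 * b * L100 = 2 * X * L10 - X ^ 3 * (L + 1) := by
    linear_combination 2 * (h9 - X * h2) - X ^ 2 * hK10
  have hL010 : 2 * b * L010 = 2 * X * L10 + X ^ 2 * (L - 2 * X) * (L + 1) := by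
    linear_combination 2 * (h10 - X * h3) + X * (L - 2 * X) * hK10
  have hL00 : 2 * a * L00 = X * (L - 1) + 2 * X * (1 - X) * L100 - X ^ 3 * (L + 1) := by
    linear_combination 2 * (h7 - X * h2) + X * hL0 - X ^ 2 * hK10
  have hL110 : 2 * b * L110 = 2 * X * L00 + X ^ 2 * (L - X) * (L + 1) := by
    linear_combination 2 * (h11 - X * h4) + X * (L - X) * hK10
  have hL10 : 2 * a * L10 = X * (L - 1) + 2 * X - 2 * X ^ 2 - 3 * X ^ 3 * (L + 1)
      + X * (1 - X) * (L - 1 + 2 * L010 + 2 * L110) := by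
    linear_combination 2 * (h8 - X * (h1 + h3 + h4)) + X * (2 - X) * hL0 - 3 * X ^ 2 * hK10
  have hL : a * (L - 2 * L10) = 1 - 2 * X - X * L - X ^ 3 * (L + 1) + 2 * X * (1 - X) * L100 := by
    linear_combination h5 - 2 * h8 - 2 * X * h2 - X * hL0 - X ^ 2 * hK10
  have hL10_of_L : (a * b + X ^ 2 * (1 - X)) * (2 * L10)
      = a * b * L - b * (1 - 2 * X - X * L - X ^ 3 * (L + 1)) + X ^ 4 * (1 - X) * (L + 1) := by
    linear_combination -(b * hL + X * (1 - X) * hL100)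
  have ha : IsUnit a := isUnit_iff_constantCoeff.mpr (by simp [a])
  have hb : IsUnit b := isUnit_iff_constantCoeff.mpr (by simp [b])
  refine ((ha.pow 2).mul hb).mul_right_eq_zero.mp ?_
  -- Eliminate `L010, L110`, then `L00`, then `L100` from `hL10`; the multiple of `L10` that
  -- remains is removed with `hL10_of_L`.
  linear_combination (a ^ 2 * b ^ 2 - X ^ 2 * (1 - X) * (a * b + X ^ 2 * (1 - X))) * hL10_of_L
    - (a * b + X ^ 2 * (1 - X)) * (b * (a * (b * hL10 + X * (1 - X) * (hL010 + hL110))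
      + X ^ 2 * (1 - X) * hL00) + X ^ 3 * (1 - X) ^ 2 * hL100)

end SysL2

/-- There is exactly one 11-tuple of power series in `ℚ[[t]]` satisfying the
system `SysL2`, and the series `L` of this solution satisfies the quartic
equation (13) of the paper (the algebraic equation for the generating
function of `𝓛⁽²⁾`). -/
theorem sysL2_unique_and_quartic :
    (∃! v : PowerSeries ℚ × PowerSeries ℚ × PowerSeries ℚ × PowerSeries ℚ ×
        PowerSeries ℚ × PowerSeries ℚ × PowerSeries ℚ × PowerSeries ℚ ×
        PowerSeries ℚ × PowerSeries ℚ × PowerSeries ℚ,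
      SysL2 v.1 v.2.1 v.2.2.1 v.2.2.2.1 v.2.2.2.2.1 v.2.2.2.2.2.1 v.2.2.2.2.2.2.1
        v.2.2.2.2.2.2.2.1 v.2.2.2.2.2.2.2.2.1 v.2.2.2.2.2.2.2.2.2.1
        v.2.2.2.2.2.2.2.2.2.2) ∧
    (∀ K10 K1100 K1010 K0110 L L0 L00 L10 L100 L010 L110 : PowerSeries ℚ,
      SysL2 K10 K1100 K1010 K0110 L L0 L00 L10 L100 L010 L110 →
      8 * X ^ 3 * L ^ 4
        - 4 * X ^ 2 * (3 * X ^ 3 + 4 * X ^ 2 - 6 * X + 3) * L ^ 3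
        + 2 * X * (3 * X ^ 5 - 12 * X ^ 4 - 10 * X ^ 3 + 14 * X ^ 2 - 10 * X + 3) * L ^ 2
        + (X - 1) * (11 * X ^ 5 - 10 * X ^ 4 - 6 * X ^ 3 - 3 * X ^ 2 - X + 1) * L
        + (X - 1) * (5 * X ^ 5 - 4 * X ^ 4 + 6 * X ^ 3 - 7 * X ^ 2 + 5 * X - 1) = 0) := by
  refine ⟨?_, fun _ _ _ _ _ _ _ _ _ _ _ h => h.quartic⟩
  refine (SysL2.Var.equivTuple _).existsUnique_congr_right.mp ?_
  exact (existsUnique_congr SysL2.iff_forall_eq).mpr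
    (existsUnique_eq_add_X_mul_eval SysL2.const SysL2.poly)
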